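/- Stability of a one-layer GNN: let φ(x, S) = σ(h ∗_S x) where σ is 1-Lipschitz and applied componentwise, and suppose ‖S‖, ‖Ŝ‖ ≤ ρ and ‖Ŝ − S‖ ≤ ε. Then for all x with ‖x‖ ≤ 1, ‖φ(x, S) − φ(x, Ŝ)‖ ≤ C ε with C = ∑_{k=1}^{K-1} |h_k| k ρ^{k−1}, i.e., the one-layer GNN is C-stable in the sense of Definition 1. -/
import Mathlib


open Finset

/-- Graph convolutional filter as an operator: `h ∗_S = ∑_{k=0}^{K-1} h_k S^k`. -/
noncomputable def graphFilter {N : ℕ} (K : ℕ) (h : ℕ → ℝ)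
    (S : EuclideanSpace ℝ (Fin N) →L[ℝ] EuclideanSpace ℝ (Fin N)) :
    EuclideanSpace ℝ (Fin N) →L[ℝ] EuclideanSpace ℝ (Fin N) :=
  ∑ k ∈ range K, h k • S ^ k

/-- Pointwise (componentwise) application of a scalar function to a Euclidean vector. -/
noncomputable def pointwiseApply {N : ℕ} (σ : ℝ → ℝ) (y : EuclideanSpace ℝ (Fin N)) :
    EuclideanSpace ℝ (Fin N) :=
  (WithLp.equiv 2 (Fin N → ℝ)).symm fun i => σ ((WithLp.equiv 2 (Fin N → ℝ)) y i)

/-- A componentwise 1-Lipschitz map is 1-Lipschitz on Euclidean space. -/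
lemma pointwiseApply_lipschitz {N : ℕ} (σ : ℝ → ℝ)
    (hσ : ∀ a b : ℝ, |σ a - σ b| ≤ |a - b|) (y z : EuclideanSpace ℝ (Fin N)) :
    ‖pointwiseApply σ y - pointwiseApply σ z‖ ≤ ‖y - z‖ := by
  rw [EuclideanSpace.norm_eq, EuclideanSpace.norm_eq]
  apply Real.sqrt_le_sqrt
  apply Finset.sum_le_sum
  intro i _
  have h1 : (pointwiseApply σ y - pointwiseApply σ z) i = σ (y i) - σ (z i) := rfl
  have h2 : (y - z) i = y i - z i := rfl
  rw [h1, h2, Real.norm_eq_abs, Real.norm_eq_abs]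
  exact pow_le_pow_left₀ (abs_nonneg _) (hσ _ _) 2

set_option synthInstance.maxHeartbeats 1000000 in
/-- Norm bound for difference of powers. -/
lemma pow_diff_bound {N : ℕ} (ρ ε : ℝ)
    (S T : EuclideanSpace ℝ (Fin N) →L[ℝ] EuclideanSpace ℝ (Fin N))
    (hS : ‖S‖ ≤ ρ) (hT : ‖T‖ ≤ ρ) (hpert : ‖T - S‖ ≤ ε) (k : ℕ) :
    ‖T ^ k - S ^ k‖ ≤ (k : ℝ) * ρ ^ (k - 1) * ε := by
  have hρ : 0 ≤ ρ := le_trans (norm_nonneg S) hS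
  have hε : 0 ≤ ε := le_trans (norm_nonneg _) hpert
  have hTp : ∀ n : ℕ, ‖T ^ n‖ ≤ ρ ^ n := by
    intro n
    induction n with
    | zero =>
      simpa [ContinuousLinearMap.one_def] using
        (ContinuousLinearMap.norm_id_le : ‖ContinuousLinearMap.id ℝ (EuclideanSpace ℝ (Fin N))‖ ≤ 1)
    | succ m ih =>
      rw [pow_succ, pow_succ]
      exact le_trans (norm_mul_le _ _)
        (mul_le_mul ih hT (norm_nonneg _) (pow_nonneg hρ m))
  induction k with
  | zero => simp
  | succ n ih =>
    have key : T ^ (n + 1) - S ^ (n + 1) = T ^ n * (T - S) + (T ^ n - S ^ n) * S := by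
      rw [mul_sub, sub_mul, pow_succ, pow_succ]
      abel
    rw [key]
    calc ‖T ^ n * (T - S) + (T ^ n - S ^ n) * S‖
        ≤ ‖T ^ n * (T - S)‖ + ‖(T ^ n - S ^ n) * S‖ := norm_add_le _ _
      _ ≤ ‖T ^ n‖ * ‖T - S‖ + ‖T ^ n - S ^ n‖ * ‖S‖ := by
          gcongr <;> exact norm_mul_le _ _
      _ ≤ ρ ^ n * ε + ((n : ℝ) * ρ ^ (n - 1) * ε) * ρ := by
          gcongr
          exact hTp n
      _ ≤ (↑(n + 1) : ℝ) * ρ ^ (n + 1 - 1) * ε := by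
          rcases Nat.eq_zero_or_pos n with hn | hn
          · subst hn; simp
          · have hr : ρ ^ (n - 1) * ρ = ρ ^ n := by
              rw [← pow_succ]
              congr 1
              omega
            have h2 : (n : ℝ) * ρ ^ (n - 1) * ε * ρ = (n : ℝ) * ρ ^ n * ε := by
              rw [← hr]; ring
            rw [h2]
            push_cast
            ring_nf
            linarith

/-- Stability of a one-layer GNN `φ(x, S) = σ(h ∗_S x)`: if `σ` is 1-Lipschitz,
`‖S‖, ‖T‖ ≤ ρ` and `‖T − S‖ ≤ ε`, then for all unit-norm `x`,
`‖φ(x,S) − φ(x,T)‖ ≤ C ε` with `C = ∑_{k=1}^{K-1} |h_k| k ρ^(k−1)`. -/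
theorem one_layer_gnn_stability {N : ℕ} (K : ℕ) (h : ℕ → ℝ) (σ : ℝ → ℝ)
    (hσ : ∀ a b : ℝ, |σ a - σ b| ≤ |a - b|) (ρ ε : ℝ)
    (S T : EuclideanSpace ℝ (Fin N) →L[ℝ] EuclideanSpace ℝ (Fin N))
    (hS : ‖S‖ ≤ ρ) (hT : ‖T‖ ≤ ρ) (hpert : ‖T - S‖ ≤ ε)
    (x : EuclideanSpace ℝ (Fin N)) (hx : ‖x‖ ≤ 1) :
    ‖pointwiseApply σ (graphFilter K h S x) - pointwiseApply σ (graphFilter K h T x)‖ ≤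
      (∑ k ∈ Icc 1 (K - 1), |h k| * (k : ℝ) * ρ ^ (k - 1)) * ε := by
  have hε : 0 ≤ ε := le_trans (norm_nonneg _) hpert
  calc ‖pointwiseApply σ (graphFilter K h S x) - pointwiseApply σ (graphFilter K h T x)‖
      ≤ ‖graphFilter K h S x - graphFilter K h T x‖ := pointwiseApply_lipschitz σ hσ _ _
    _ = ‖(graphFilter K h S - graphFilter K h T) x‖ := by
        rw [ContinuousLinearMap.sub_apply]
    _ ≤ ‖graphFilter K h S - graphFilter K h T‖ * ‖x‖ :=
        (graphFilter K h S - graphFilter K h T).le_opNorm x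
    _ ≤ ‖graphFilter K h S - graphFilter K h T‖ := by
        nlinarith [norm_nonneg (graphFilter K h S - graphFilter K h T), norm_nonneg x]
    _ ≤ ∑ k ∈ range K, |h k| * ((k : ℝ) * ρ ^ (k - 1) * ε) := by
        unfold graphFilter
        rw [← Finset.sum_sub_distrib]
        refine le_trans (norm_sum_le _ _) (Finset.sum_le_sum fun k _ => ?_)
        have : h k • S ^ k - h k • T ^ k = h k • (S ^ k - T ^ k) := by
          rw [smul_sub]
        rw [this]
        refine le_trans (ContinuousLinearMap.opNorm_smul_le (h k) (S ^ k - T ^ k)) ?_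
        rw [Real.norm_eq_abs]
        refine mul_le_mul_of_nonneg_left ?_ (abs_nonneg _)
        rw [← norm_neg, neg_sub]
        exact pow_diff_bound ρ ε S T hS hT hpert k
    _ = (∑ k ∈ Icc 1 (K - 1), |h k| * (k : ℝ) * ρ ^ (k - 1)) * ε := by
        rw [Finset.sum_mul]
        refine (Finset.sum_subset ?_ ?_).symm.trans (Finset.sum_congr rfl fun k _ => by ring)
        · intro k hk
          simp only [Finset.mem_Icc] at hk
          simp only [Finset.mem_range]
          omega
        · intro k hk hk'
          simp only [Finset.mem_range] at hk
          simp only [Finset.mem_Icc, not_and, not_le] at hk'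
          have : k = 0 := by omega
          subst this
          simp
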